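/- There do not exist elements f ∈ A₁ and g ∈ A₂ such that −X = g + f·Y holds in R₁₂. (This is the key non-splitting claim showing that the extension defining the Quillen bundle on the real anisotropic conic does not split.) -/

import Mathlib

noncomputable section

/-- The coordinate ring `R₁ = ℝ[X,Y]/(X²+Y²+1)` of the affine open `U₁ = D₊(z)` of the
real anisotropic conic `C = V(x²+y²+z²) ⊂ ℙ²_ℝ`. -/
def R1 : Type :=
  MvPolynomial (Fin 2) ℝ ⧸
    Ideal.span {(MvPolynomial.X 0 : MvPolynomial (Fin 2) ℝ) ^ 2 + MvPolynomial.X 1 ^ 2 + 1}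

instance : CommRing R1 := Ideal.Quotient.commRing _
instance : Algebra ℝ R1 := Ideal.Quotient.algebra ℝ

/-- `X`, the image of the first variable in `R₁` (the rational function `x/z`). -/
def X1 : R1 := Ideal.Quotient.mk _ (MvPolynomial.X 0)

/-- `Y`, the image of the second variable in `R₁` (the rational function `y/z`). -/
def Y1 : R1 := Ideal.Quotient.mk _ (MvPolynomial.X 1)

/-- `R₁₂ = R₁[Y⁻¹]`, the localization of `R₁` away from `Y`: the coordinate ring of
`U₁ ∩ U₂` where `U₂ = D₊(y)`. -/
abbrev R12 : Type := Localization.Away Y1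

/-- The image of `X` in `R₁₂`. -/
def X12 : R12 := algebraMap R1 R12 X1

/-- The image of `Y` in `R₁₂`. -/
def Y12 : R12 := algebraMap R1 R12 Y1

/-- `Y` as a unit of `R₁₂`. -/
def Yu : R12ˣ := (IsLocalization.Away.algebraMap_isUnit (S := R12) Y1).unit

/-- `A₁`, the image of `R₁` in `R₁₂`: the `ℝ`-subalgebra generated by `X` and `Y`. -/
def A1 : Subalgebra ℝ R12 := Algebra.adjoin ℝ {X12, Y12}

/-- `A₂`, the `ℝ`-subalgebra of `R₁₂` generated by `X·Y⁻¹` (i.e. `x/y`) and `Y⁻¹`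
(i.e. `z/y`); it is isomorphic to the coordinate ring `R₂` of `U₂`. -/
def A2 : Subalgebra ℝ R12 := Algebra.adjoin ℝ {X12 * (↑Yu⁻¹ : R12), (↑Yu⁻¹ : R12)}

/-! ### Auxiliary machinery for the proof

We map everything into `K = ℂ(u)` (the rational-function field), via the complex
parametrization `X ↦ (u²−1)/(2u)`, `Y ↦ (u²+1)/(2iu)` of the conic.  Images of `A₁`
are Laurent polynomials; images of `A₂` are of the form `q/(u²+1)ⁿ` with
`deg q ≤ 2n`.  Clearing denominators in `−X = g + f·Y` yields a polynomial identity
that is shown to be impossible. -/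

namespace Statement9Aux

open Polynomial

lemma Xsq_add_one_ne : ((X:ℂ[X])^2 + 1) ≠ 0 := by
  intro h
  simpa using congrArg (eval 0) h

lemma ndXsqp1 : ((X:ℂ[X])^2 + 1).natDegree = 2 := by
  have : ((X:ℂ[X])^2 + 1) = X^2 + C 1 := by simp
  rw [this, natDegree_X_pow_add_C]

lemma ndXsqm1 : ((X:ℂ[X])^2 - 1).natDegree = 2 := by
  have : ((X:ℂ[X])^2 - 1) = X^2 - C 1 := by simp
  rw [this, natDegree_X_pow_sub_C]

lemma nd2CI : (2 * C Complex.I : ℂ[X]).natDegree = 0 := by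
  have : (2 * C Complex.I : ℂ[X]) = C (2 * Complex.I) := by
    rw [map_mul, map_ofNat]
  rw [this, natDegree_C]

/-- The key polynomial impossibility. -/
lemma poly_key (n : ℕ) : ∀ (m : ℕ) (p q : ℂ[X]), q.natDegree ≤ 2*n →
    C Complex.I * (X^2 - 1) * X^m * (X^2+1)^n
      + 2 * C Complex.I * X^(m+1) * q
      + p * (X^2+1)^(n+1) ≠ 0 := by
  intro m
  induction m with
  | zero =>
    intro p q hq h0
    set h : ℂ[X] := C Complex.I * (X^2 - 1) + p * (X^2+1) with hdef
    have hfact : (X^2+1)^n * h = -(2 * C Complex.I * X * q) := by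
      rw [hdef]; linear_combination h0
    by_cases hh : h = 0
    · have h1 : h.eval Complex.I = 0 := by rw [hh]; simp
      rw [hdef] at h1
      simp [Complex.I_sq, Complex.ext_iff] at h1
      norm_num at h1
    · have hWn : ((X:ℂ[X])^2+1)^n ≠ 0 := pow_ne_zero _ Xsq_add_one_ne
      have hnd : 2*n + h.natDegree ≤ 2*n + 1 := by
        have e1 : ((X^2+1:ℂ[X])^n * h).natDegree = 2*n + h.natDegree := by
          rw [natDegree_mul hWn hh, natDegree_pow, ndXsqp1]; ring
        have e2 : (-(2 * C Complex.I * X * q)).natDegree ≤ 1 + 2*n := by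
          rw [natDegree_neg]
          calc (2 * C Complex.I * X * q).natDegree
              ≤ (2 * C Complex.I * X).natDegree + q.natDegree := natDegree_mul_le
            _ ≤ 1 + 2*n := by
                have h3 : (2 * C Complex.I * X : ℂ[X]).natDegree ≤ 1 := by
                  calc (2 * C Complex.I * X : ℂ[X]).natDegree ≤
                      (2 * C Complex.I : ℂ[X]).natDegree + (X:ℂ[X]).natDegree := natDegree_mul_le
                    _ ≤ 1 := by simp [natDegree_X, nd2CI]
                omega
        rw [← e1, hfact]
        omega
      have hnd1 : h.natDegree ≤ 1 := by omega
      by_cases hp : p = 0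
      · rw [hp] at hdef
        have : h.natDegree = 2 := by
          rw [hdef]
          simp only [zero_mul, add_zero]
          rw [natDegree_C_mul Complex.I_ne_zero, ndXsqm1]
        omega
      · have hpe : p * (X^2+1) = h - C Complex.I * (X^2 - 1) := by rw [hdef]; ring
        have hnp : p.natDegree + 2 ≤ 2 := by
          have e1 : (p * ((X:ℂ[X])^2+1)).natDegree = p.natDegree + 2 := by
            rw [natDegree_mul hp Xsq_add_one_ne, ndXsqp1]
          have e2 : (h - C Complex.I * ((X:ℂ[X])^2 - 1)).natDegree ≤ 2 := by
            apply le_trans (natDegree_sub_le _ _)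
            have : (C Complex.I * ((X:ℂ[X])^2 - 1)).natDegree ≤ 2 := by
              rw [natDegree_C_mul Complex.I_ne_zero, ndXsqm1]
            omega
          rw [← e1, hpe] at *
          omega
        have hp0 : p.natDegree = 0 := by omega
        obtain ⟨c, rfl⟩ := natDegree_eq_zero.mp hp0
        have hc2 : h.coeff 2 = 0 := coeff_eq_zero_of_natDegree_lt (by omega)
        have hcval : h.coeff 2 = Complex.I + c := by
          rw [hdef]
          simp [coeff_add, coeff_sub, coeff_one, coeff_C_mul, coeff_X_pow, coeff_C]
        rw [hcval] at hc2
        have hc : c = -Complex.I := by linear_combination hc2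
        have hCc : (C c : ℂ[X]) = -(C Complex.I) := by rw [hc, map_neg]
        have hhval : h = -(2 * C Complex.I) := by rw [hdef, hCc]; ring
        rw [hhval] at hfact
        have h2I : (2 * C Complex.I : ℂ[X]) ≠ 0 := by
          intro hz
          have := congrArg (eval 0) hz
          simp [Complex.I_ne_zero] at this
        have hXq : ((X:ℂ[X])^2+1)^n = X * q := by
          apply mul_left_cancel₀ h2I
          linear_combination -hfact
        have := congrArg (eval 0) hXq
        simp at this
  | succ m ih =>
    intro p q hq h0
    have hp0 : p.coeff 0 = 0 := by
      have := congrArg (eval 0) h0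
      simpa [coeff_zero_eq_eval_zero] using this
    have hpX : Polynomial.X * p.divX = p := by
      have := X_mul_divX_add p
      rw [hp0] at this; simpa using this
    have h0' : Polynomial.X * (C Complex.I * (X^2 - 1) * X^m * (X^2+1)^n
        + 2 * C Complex.I * X^(m+1) * q
        + p.divX * (X^2+1)^(n+1)) = 0 := by
      linear_combination h0 + ((X^2+1:ℂ[X]))^(n+1) * hpX
    rcases mul_eq_zero.mp h0' with h | h
    · exact X_ne_zero h
    · exact ih p.divX q hq h

/-- `K = ℂ(u)`. -/
abbrev K : Type := RatFunc ℂ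

def U : K := algebraMap ℂ[X] K X
def J : K := algebraMap ℂ[X] K (C Complex.I)

lemma Udef : algebraMap ℂ[X] K X = U := rfl
lemma Jdef : algebraMap ℂ[X] K (C Complex.I) = J := rfl

lemma injK : Function.Injective (algebraMap ℂ[X] K) := IsFractionRing.injective _ _

lemma hU : U ≠ 0 := by
  intro h
  exact X_ne_zero (injK (by simpa [U] using h))

lemma hJ2 : J^2 = -1 := by
  rw [J, ← map_pow, ← C_pow, Complex.I_sq]
  simp

lemma hJ : J ≠ 0 := by
  intro h
  have : (C Complex.I : ℂ[X]) = 0 := injK (by simpa [J] using h)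
  exact Complex.I_ne_zero (by simpa using this)

lemma hV : U^2 + 1 ≠ 0 := by
  intro h
  apply Xsq_add_one_ne
  apply injK
  simpa [U, map_add, map_pow, map_one] using h

def xx : K := (U^2 - 1) / (2*U)
def yy : K := (U^2 + 1) / (2*J*U)

lemma h2K : (2:K) ≠ 0 := by
  intro h
  have h2 : algebraMap ℂ[X] K 2 = algebraMap ℂ[X] K 0 := by
    rw [map_ofNat, map_zero]; exact h
  have := injK h2
  norm_num at this

lemma h2U : (2*U : K) ≠ 0 := mul_ne_zero h2K hU

lemma h2JU : (2*J*U : K) ≠ 0 := mul_ne_zero (mul_ne_zero h2K hJ) hU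

lemma hyy_ne : yy ≠ 0 := div_ne_zero hV h2JU

lemma key_rel : xx^2 + yy^2 + 1 = 0 := by
  rw [xx, yy]
  field_simp [hU, hJ, h2K]
  linear_combination (U^2+1)^2 * hJ2

def ψ₀ : MvPolynomial (Fin 2) ℝ →+* K :=
  MvPolynomial.eval₂Hom ((algebraMap ℂ[X] K).comp (Polynomial.C.comp Complex.ofRealHom)) ![xx, yy]

lemma ψ₀_rel :
    ψ₀ ((MvPolynomial.X 0 : MvPolynomial (Fin 2) ℝ) ^ 2 + MvPolynomial.X 1 ^ 2 + 1) = 0 := by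
  simp [ψ₀]
  linear_combination key_rel

def ψ : R1 →+* K :=
  Ideal.Quotient.lift _ ψ₀ (by
    intro a ha
    refine (Ideal.span_le.mpr ?_ ha : a ∈ RingHom.ker ψ₀)
    intro w hw
    simp only [Set.mem_singleton_iff] at hw
    subst hw
    simpa [RingHom.mem_ker] using ψ₀_rel)

lemma ψX : ψ X1 = xx :=
  (Ideal.Quotient.lift_mk _ _ _).trans (by simp [ψ₀])

lemma ψY : ψ Y1 = yy :=
  (Ideal.Quotient.lift_mk _ _ _).trans (by simp [ψ₀])

lemma hyyunit : IsUnit (ψ Y1) := by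
  rw [ψY]; exact (isUnit_iff_ne_zero).mpr hyy_ne

def Φ : R12 →+* K := IsLocalization.Away.lift Y1 hyyunit

lemma Φalg (a : R1) : Φ (algebraMap R1 R12 a) = ψ a :=
  IsLocalization.Away.lift_eq Y1 hyyunit a

lemma ΦX : Φ X12 = xx := by rw [X12, Φalg, ψX]

lemma ΦY : Φ Y12 = yy := by rw [Y12, Φalg, ψY]

lemma Y12coe : Y12 = (↑Yu : R12) := by
  rw [Y12, Yu]
  exact (IsUnit.unit_spec _).symm

lemma ΦYinv : Φ (↑Yu⁻¹ : R12) = yy⁻¹ := by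
  have h1 : Φ Y12 * Φ (↑Yu⁻¹ : R12) = 1 := by
    rw [← map_mul, Y12coe, Units.mul_inv, map_one]
  rw [ΦY] at h1
  exact eq_inv_of_mul_eq_one_right h1

lemma Φscalar (r : ℝ) : Φ (algebraMap ℝ R12 r) = algebraMap ℂ[X] K (C (r:ℂ)) := by
  rw [IsScalarTower.algebraMap_apply ℝ R1 R12, Φalg]
  have h1 : algebraMap ℝ R1 r = Ideal.Quotient.mk _ (algebraMap ℝ (MvPolynomial (Fin 2) ℝ) r) :=
    (Ideal.Quotient.mk_algebraMap (R₁ := ℝ) _ r).symm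
  rw [h1]
  refine (Ideal.Quotient.lift_mk _ _ _).trans ?_
  rw [show algebraMap ℝ (MvPolynomial (Fin 2) ℝ) r = MvPolynomial.C r from rfl]
  simp [ψ₀]

lemma c2inv : algebraMap ℂ[X] K (C ((2:ℂ)⁻¹)) = (2:K)⁻¹ := by
  refine eq_inv_of_mul_eq_one_right ?_
  rw [show (2:K) = algebraMap ℂ[X] K 2 from (map_ofNat (algebraMap ℂ[X] K) 2).symm,
    ← map_mul]
  have h1 : (2 * C ((2:ℂ)⁻¹) : ℂ[X]) = 1 := by
    rw [show (2:ℂ[X]) = C 2 from (map_ofNat C 2).symm, ← map_mul]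
    norm_num
  rw [h1, map_one]

lemma xxU : xx * U = algebraMap ℂ[X] K (C ((2:ℂ)⁻¹) * (X^2 - 1)) := by
  simp only [map_mul, map_sub, map_pow, map_one, Udef, c2inv]
  rw [xx]
  field_simp [hU, h2K]

lemma yyU : yy * U = algebraMap ℂ[X] K (C (-Complex.I * (2:ℂ)⁻¹) * (X^2 + 1)) := by
  have hc : (C (-Complex.I * (2:ℂ)⁻¹) : ℂ[X]) = -(C Complex.I * C ((2:ℂ)⁻¹)) := by
    rw [map_mul, map_neg, neg_mul]
  rw [hc]
  simp only [map_mul, map_add, map_pow, map_one, map_neg, Udef, Jdef, c2inv]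
  rw [yy]
  field_simp [hU, hJ, h2K]
  linear_combination (U^2+1) * hJ2

lemma xy_rep : (xx * yy⁻¹) * (U^2+1) = algebraMap ℂ[X] K (C Complex.I * (X^2-1)) := by
  simp only [map_mul, map_sub, map_pow, map_one, Udef, Jdef]
  rw [xx, yy, inv_div]
  field_simp [hU, hJ, h2K, hV]

lemma yinv_rep : (yy⁻¹ : K) * (U^2+1) = algebraMap ℂ[X] K (2 * C Complex.I * X) := by
  simp only [map_mul, map_ofNat, Udef, Jdef]
  rw [yy, inv_div]
  field_simp [hU, hJ, h2K, hV]

/-- Subalgebra of elements whose image in `K` is a Laurent polynomial. -/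
def T1 : Subalgebra ℝ R12 where
  carrier := {a | ∃ (p : ℂ[X]) (m : ℕ), Φ a * U^m = algebraMap ℂ[X] K p}
  mul_mem' := by
    rintro a b ⟨p, m, hp⟩ ⟨p', m', hp'⟩
    refine ⟨p * p', m + m', ?_⟩
    simp only [map_mul, pow_add]
    linear_combination (Φ b * U^m') * hp + (algebraMap ℂ[X] K p) * hp'
  add_mem' := by
    rintro a b ⟨p, m, hp⟩ ⟨p', m', hp'⟩
    refine ⟨p * X^m' + p' * X^m, m + m', ?_⟩
    simp only [map_add, map_mul, map_pow, Udef, pow_add]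
    linear_combination (U^m') * hp + (U^m) * hp'
  one_mem' := ⟨1, 0, by simp⟩
  zero_mem' := ⟨0, 0, by simp⟩
  algebraMap_mem' := fun r => ⟨C (r:ℂ), 0, by rw [Φscalar]; simp⟩

/-- Subalgebra of elements whose image in `K` is `q/(u²+1)ⁿ` with `deg q ≤ 2n`. -/
def T2 : Subalgebra ℝ R12 where
  carrier := {a | ∃ (q : ℂ[X]) (n : ℕ),
    Φ a * (U^2+1)^n = algebraMap ℂ[X] K q ∧ q.natDegree ≤ 2*n}
  mul_mem' := by
    rintro a b ⟨q, n, hq, hd⟩ ⟨q', n', hq', hd'⟩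
    refine ⟨q * q', n + n', ?_, ?_⟩
    · simp only [map_mul, pow_add]
      linear_combination (Φ b * (U^2+1)^n') * hq + (algebraMap ℂ[X] K q) * hq'
    · calc (q * q').natDegree ≤ q.natDegree + q'.natDegree := natDegree_mul_le
        _ ≤ 2*(n+n') := by omega
  add_mem' := by
    rintro a b ⟨q, n, hq, hd⟩ ⟨q', n', hq', hd'⟩
    refine ⟨q * (X^2+1)^n' + q' * (X^2+1)^n, n + n', ?_, ?_⟩
    · simp only [map_add, map_mul, map_pow, map_one, Udef, pow_add]
      linear_combination ((U^2+1)^n') * hq + ((U^2+1)^n) * hq'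
    · have e1 : (q * ((X:ℂ[X])^2+1)^n').natDegree ≤ 2*n + 2*n' := by
        calc (q * ((X:ℂ[X])^2+1)^n').natDegree
            ≤ q.natDegree + (((X:ℂ[X])^2+1)^n').natDegree := natDegree_mul_le
          _ ≤ 2*n + 2*n' := by rw [natDegree_pow, ndXsqp1]; omega
      have e2 : (q' * ((X:ℂ[X])^2+1)^n).natDegree ≤ 2*n + 2*n' := by
        calc (q' * ((X:ℂ[X])^2+1)^n).natDegree
            ≤ q'.natDegree + (((X:ℂ[X])^2+1)^n).natDegree := natDegree_mul_le
          _ ≤ 2*n + 2*n' := by rw [natDegree_pow, ndXsqp1]; omega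
      calc (q * ((X:ℂ[X])^2+1)^n' + q' * ((X:ℂ[X])^2+1)^n).natDegree
          ≤ max (q * ((X:ℂ[X])^2+1)^n').natDegree (q' * ((X:ℂ[X])^2+1)^n).natDegree :=
            natDegree_add_le _ _
        _ ≤ 2*(n+n') := by omega
  one_mem' := ⟨1, 0, by simp, by simp⟩
  zero_mem' := ⟨0, 0, by simp, by simp⟩
  algebraMap_mem' := fun r => ⟨C (r:ℂ), 0, by rw [Φscalar]; simp, by simp⟩

lemma memA1 {a : R12} (ha : a ∈ A1) :
    ∃ (p : ℂ[X]) (m : ℕ), Φ a * U^m = algebraMap ℂ[X] K p := by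
  suffices h : A1 ≤ T1 from h ha
  refine Algebra.adjoin_le ?_
  rintro s (rfl | rfl)
  · exact ⟨C ((2:ℂ)⁻¹) * (X^2 - 1), 1, by rw [ΦX, pow_one]; exact xxU⟩
  · exact ⟨C (-Complex.I * (2:ℂ)⁻¹) * (X^2 + 1), 1, by rw [ΦY, pow_one]; exact yyU⟩

lemma memA2 {a : R12} (ha : a ∈ A2) :
    ∃ (q : ℂ[X]) (n : ℕ),
      Φ a * (U^2+1)^n = algebraMap ℂ[X] K q ∧ q.natDegree ≤ 2*n := by
  suffices h : A2 ≤ T2 from h ha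
  refine Algebra.adjoin_le ?_
  rintro s (rfl | rfl)
  · refine ⟨C Complex.I * (X^2 - 1), 1, ?_, ?_⟩
    · rw [map_mul, ΦX, ΦYinv, pow_one]; exact xy_rep
    · calc (C Complex.I * ((X:ℂ[X])^2 - 1)).natDegree = 2 := by
            rw [natDegree_C_mul Complex.I_ne_zero, ndXsqm1]
        _ ≤ 2*1 := by omega
  · refine ⟨2 * C Complex.I * X, 1, ?_, ?_⟩
    · rw [ΦYinv, pow_one]; exact yinv_rep
    · calc (2 * C Complex.I * (X:ℂ[X])).natDegree
          ≤ (2 * C Complex.I : ℂ[X]).natDegree + (X:ℂ[X]).natDegree := natDegree_mul_le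
        _ ≤ 2*1 := by simp [natDegree_X, nd2CI]

end Statement9Aux

open Statement9Aux Polynomial in
/-- there do not exist `f ∈ A₁` and `g ∈ A₂` such that `−X = g + f·Y` in
`R₁₂`.  (The key non-splitting claim for the extension defining the Quillen bundle.) -/
theorem statement_9 :
    ¬ ∃ f g : R12, f ∈ A1 ∧ g ∈ A2 ∧ -X12 = g + f * Y12 := by
  rintro ⟨f, g, hf, hg, heq⟩
  obtain ⟨p, m, hp⟩ := memA1 hf
  obtain ⟨q, n, hq, hqdeg⟩ := memA2 hg
  have heqK : -xx = Φ g + Φ f * yy := by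
    have h0 := congrArg Φ heq
    rw [map_neg, ΦX, map_add, map_mul, ΦY] at h0
    exact h0
  have e1 : xx * (2*J*U) = J*(U^2-1) := by
    rw [xx]
    field_simp [hU, h2K]
  have e2 : yy * (2*J*U) = U^2+1 := div_mul_cancel₀ _ h2JU
  have key : J*(U^2-1) + 2*J*U*(Φ g) + (Φ f)*(U^2+1) = 0 := by
    linear_combination -e1 - Φ f * e2 - 2*J*U*heqK
  have main : C Complex.I * (X^2-1) * X^m * (X^2+1)^n
      + 2 * C Complex.I * X^(m+1) * q + p * (X^2+1)^(n+1) = 0 := by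
    apply injK
    rw [map_zero]
    simp only [map_add, map_mul, map_pow, map_sub, map_one, map_ofNat, Udef, Jdef]
    linear_combination (U^m*(U^2+1)^n) * key - (2*J*U^(m+1)) * hq - ((U^2+1)^(n+1)) * hp
  exact poly_key n m p q hqdeg main
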